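/- arXiv:1006.5141 — 9 statements merged into one kernel-verified Lean document; each statement's English description precedes it below -/
import Mathlib

section
/- Let P be a countable Köthe set on a set I. Then the Köthe space λ(P) is closed under pointwise multiplication (i.e., x, y ∈ λ(P) implies (x_i y_i)_{i∈I} ∈ λ(P)) if and only if P ≺ P². -/
/-!
If `P ≺ P²`, say `p ≤ C q²`, then `‖x y‖_p ≤ C ‖x‖_q sup_i |y_i| q_i ≤ C ‖x‖_q ‖y‖_q`.

Conversely, suppose `p ∈ P` is not dominated by any `C q²`. Countability and directedness give an
increasing cofinal sequence `r₀ ≤ r₁ ≤ ⋯` in `P`, and the sets `Bₙ = {i | 4ⁿ rₙ(i)² < p(i)}` are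
nonempty, decreasing, and (by (P1)) have empty intersection. Picking distinct `jₙ ∈ Bₙ` and
`x = 1/√p` on `{jₙ}`, the terms of `‖x‖_{rₙ}` along `j_k` are eventually below `2⁻ᵏ`, while every term
of `‖x²‖_p` equals `1`.
-/

open Filter Function Set

section

variable {I : Type*}

def kotheSpace (P : Set (I → ℝ)) : Set (I → ℂ) :=
  {x | ∀ p ∈ P, Summable fun i => ‖x i‖ * p i}

theorem Summable.norm_mul_mul_of_le_mul_sq {R : Type*} [NormedRing R] {x y : I → R}
    {p q : I → ℝ} {C : ℝ} (hp : 0 ≤ p) (hq : 0 ≤ q) (hC : 0 ≤ C)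
    (hpq : ∀ i, p i ≤ C * q i ^ 2) (hx : Summable fun i => ‖x i‖ * q i)
    (hy : Summable fun i => ‖y i‖ * q i) : Summable fun i => ‖x i * y i‖ * p i := by
  have hxq : ∀ i, 0 ≤ ‖x i‖ * q i := fun i => mul_nonneg (norm_nonneg _) (hq i)
  have hyq : ∀ i, ‖y i‖ * q i ≤ ∑' j, ‖y j‖ * q j :=
    fun i => hy.le_tsum i fun j _ => mul_nonneg (norm_nonneg _) (hq j)
  refine (hx.mul_left (C * ∑' j, ‖y j‖ * q j)).of_nonneg_of_le
    (fun i => mul_nonneg (norm_nonneg _) (hp i)) fun i => ?_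
  calc ‖x i * y i‖ * p i ≤ ‖x i‖ * ‖y i‖ * (C * q i ^ 2) :=
        mul_le_mul (norm_mul_le _ _) (hpq i) (hp i) (by positivity)
    _ = C * (‖y i‖ * q i) * (‖x i‖ * q i) := by ring
    _ ≤ C * (∑' j, ‖y j‖ * q j) * (‖x i‖ * q i) := by gcongr; exacts [hxq i, hyq i]

theorem DirectedOn.exists_monotone_cofinal_seq {α : Type*} [Preorder α] {s : Set α}
    (hd : DirectedOn (· ≤ ·) s) (hs : s.Countable) (hne : s.Nonempty) :
    ∃ r : ℕ → α, Monotone r ∧ (∀ n, r n ∈ s) ∧ ∀ a ∈ s, ∃ n, a ≤ r n := by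
  have := hd.isDirectedOrder
  have := hs.to_subtype
  have := hne.to_subtype
  obtain ⟨r, hr_mono, hr_top⟩ := exists_seq_monotone_tendsto_atTop_atTop s
  exact ⟨fun n => r n, fun m n hmn => hr_mono hmn, fun n => (r n).2,
    fun a ha => (hr_top.eventually_ge_atTop ⟨a, ha⟩).exists⟩

theorem exists_injective_forall_mem_of_antitone {α : Type*} {B : ℕ → Set α} (hB : Antitone B)
    (hne : ∀ n, (B n).Nonempty) (hexit : ∀ a, ∃ n, a ∉ B n) :
    ∃ j : ℕ → α, Injective j ∧ ∀ n, j n ∈ B n := by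
  choose pt hpt using hne
  choose exit hexit using hexit
  have hlt : ∀ n, n < exit (pt n) := fun n => not_le.1 fun h => hexit _ (hB h (hpt n))
  -- jumping to `exit (pt n)` makes every later point differ from `pt n`
  let m : ℕ → ℕ := fun n => Nat.rec 0 (fun _ k => exit (pt k)) n
  have hm : StrictMono m := strictMono_nat_of_lt_succ fun n => hlt (m n)
  refine ⟨fun n => pt (m n), Injective.of_lt_imp_ne fun n k hnk heq => ?_,
    fun n => hB hm.le_apply (hpt (m n))⟩
  have hk : pt (m k) ∈ B (m (n + 1)) := hB (hm.monotone (Nat.succ_le_of_lt hnk)) (hpt (m k))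
  rw [← heq] at hk
  exact hexit _ hk

theorem exists_forall_summable_not_summable_mul_self {r : ℕ → I → ℝ} {p : I → ℝ} {j : ℕ → I}
    (hr : Monotone r) (hr0 : ∀ n, 0 ≤ r n) (hj : Injective j)
    (hjp : ∀ k, 4 ^ k * r k (j k) ^ 2 < p (j k)) :
    ∃ x : I → ℂ, (∀ n, Summable fun i => ‖x i‖ * r n i) ∧
      ¬ Summable fun i => ‖x i * x i‖ * p i := by
  set x : I → ℂ := (range j).indicator fun i => ((√(p i))⁻¹ : ℝ)
  have hp : ∀ k, 0 < p (j k) := fun k => (by positivity : (0 : ℝ) ≤ _).trans_lt (hjp k)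
  have hx : ∀ k, ‖x (j k)‖ = (√(p (j k)))⁻¹ := fun k => by simp [x]
  have hx_off : ∀ i ∉ range j, x i = 0 := fun i hi => indicator_of_notMem hi _
  have hr_lt : ∀ k, r k (j k) / √(p (j k)) < (1 / 2) ^ k := fun k => by
    have hsqrt : 2 ^ k * r k (j k) < √(p (j k)) := by
      rw [Real.lt_sqrt (mul_nonneg (by positivity) (hr0 k (j k))), mul_pow, ← pow_mul, mul_comm k,
        pow_mul]
      norm_num [hjp k]
    rwa [div_lt_iff₀ (Real.sqrt_pos.2 (hp k)), one_div, inv_pow, inv_mul_eq_div,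
      lt_div_iff₀' (by positivity)]
  refine ⟨x, fun n => ?_, fun hsum => ?_⟩
  · rw [← hj.summable_iff fun i hi => by simp [hx_off i hi]]
    refine .of_norm_bounded_eventually_nat summable_geometric_two ?_
    filter_upwards [eventually_ge_atTop n] with k hk
    calc ‖‖x (j k)‖ * r n (j k)‖ = r n (j k) / √(p (j k)) := by
          rw [hx, Real.norm_of_nonneg (mul_nonneg (by positivity) (hr0 n (j k))), inv_mul_eq_div]
      _ ≤ r k (j k) / √(p (j k)) := by gcongr; exact hr hk _
      _ ≤ (1 / 2) ^ k := (hr_lt k).le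
  · have hone : (fun i => ‖x i * x i‖ * p i) ∘ j = fun _ => (1 : ℝ) := funext fun k => by
      rw [comp_apply, norm_mul, hx, ← sq, inv_pow, Real.sq_sqrt (hp k).le,
        inv_mul_cancel₀ (hp k).ne']
    exact one_ne_zero (summable_const_iff (1 : ℝ) |>.1 (hone ▸ hsum.comp_injective hj))

theorem exists_mem_kotheSpace_not_summable_mul_self {P : Set (I → ℝ)} (hPcount : P.Countable)
    (hP0 : ∀ p ∈ P, 0 ≤ p) (hP1 : ∀ i, ∃ p ∈ P, 0 < p i) (hP2 : DirectedOn (· ≤ ·) P)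
    {p : I → ℝ} (hp : p ∈ P) (hnot : ∀ q ∈ P, ∀ C, 0 < C → ∃ i, C * q i ^ 2 < p i) :
    ∃ x ∈ kotheSpace P, ¬ Summable fun i => ‖x i * x i‖ * p i := by
  obtain ⟨r, hr, hrP, hr_cof⟩ := hP2.exists_monotone_cofinal_seq hPcount ⟨p, hp⟩
  have hr0 : ∀ n, 0 ≤ r n := fun n => hP0 _ (hrP n)
  have hle : ∀ {m n i}, m ≤ n → (4 : ℝ) ^ m * r m i ^ 2 ≤ 4 ^ n * r n i ^ 2 := fun {m n i} h => by
    have := hr0 m i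
    gcongr
    exacts [by norm_num, hr h i]
  let B : ℕ → Set I := fun n => {i | 4 ^ n * r n i ^ 2 < p i}
  have hB_exit : ∀ i, ∃ n, i ∉ B n := by
    intro i
    obtain ⟨q, hq, hqi⟩ := hP1 i
    obtain ⟨N, hN⟩ := hr_cof q hq
    have hpos : 0 < r N i ^ 2 := pow_pos (hqi.trans_le (hN i)) 2
    obtain ⟨n, hn, hNn⟩ := (((tendsto_pow_atTop_atTop_of_one_lt (by norm_num : (1 : ℝ) < 4)).atTop_mul_const
      hpos).eventually_ge_atTop (p i) |>.and (eventually_ge_atTop N)).exists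
    have := hr0 N i
    exact ⟨n, fun hi => (hn.trans (by gcongr; exact hr hNn i)).not_gt hi⟩
  obtain ⟨j, hj, hjB⟩ := exists_injective_forall_mem_of_antitone (B := B)
    (fun m n h i hi => (hle h).trans_lt hi) (fun n => hnot (r n) (hrP n) (4 ^ n) (by positivity))
    hB_exit
  obtain ⟨x, hx, hxx⟩ := exists_forall_summable_not_summable_mul_self hr hr0 hj hjB
  refine ⟨x, fun q hq => ?_, hxx⟩
  obtain ⟨n, hn⟩ := hr_cof q hq
  exact (hx n).of_nonneg_of_le (fun i => mul_nonneg (norm_nonneg _) (hP0 q hq i))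
    fun i => mul_le_mul_of_nonneg_left (hn i) (norm_nonneg _)

end

/-- For a countable Köthe set `P` on `I`, the Köthe space `λ(P)` is closed
under pointwise multiplication iff `P ≺ P²`. -/
theorem kothe_closed_under_mul_iff {I : Type*} (P : Set (I → ℝ))
    (hPcount : P.Countable)
    (hP0 : ∀ p ∈ P, ∀ i, 0 ≤ p i)
    (hP1 : ∀ i, ∃ p ∈ P, 0 < p i)
    (hP2 : ∀ p ∈ P, ∀ q ∈ P, ∃ r ∈ P, ∀ i, max (p i) (q i) ≤ r i) :
    (∀ x y : I → ℂ,
        (∀ p ∈ P, Summable fun i => ‖x i‖ * p i) →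
        (∀ p ∈ P, Summable fun i => ‖y i‖ * p i) →
        (∀ p ∈ P, Summable fun i => ‖x i * y i‖ * p i)) ↔
      (∀ p ∈ P, ∃ q ∈ P, ∃ C : ℝ, 0 < C ∧ ∀ i, p i ≤ C * (q i) ^ 2) := by
  constructor
  · intro hmul p hp
    by_contra! hnot
    have hdir : DirectedOn (· ≤ ·) P := fun a ha b hb =>
      (hP2 a ha b hb).imp fun _ ⟨hc, hle⟩ =>
        ⟨hc, fun i => (le_max_left _ _).trans (hle i), fun i => (le_max_right _ _).trans (hle i)⟩
    obtain ⟨x, hx, hxx⟩ :=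
      exists_mem_kotheSpace_not_summable_mul_self hPcount hP0 hP1 hdir hp hnot
    exact hxx (hmul x x hx hx p hp)
  · intro hdom x y hx hy p hp
    obtain ⟨q, hq, C, hC, hpq⟩ := hdom p hp
    exact (hx q hq).norm_mul_mul_of_le_mul_sq (hP0 p hp) (hP0 q hq) hC.le hpq (hy q hq)
end

section
/- Let P be a Köthe set on a set I with P ≺ P². Then for every p ∈ P there exist q ∈ P and C > 0 such that ∑_{i∈I} |a_i b_i| p_i ≤ C (∑_{i∈I} |a_i| q_i)(∑_{i∈I} |b_i| q_i) for all a, b ∈ λ(P). In particular, λ(P) is closed under pointwise multiplication and the multiplication is jointly continuous for the topology given by the seminorms ‖·‖_p. -/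
/-! Choosing `q` with `p ≤ C q²`, the weight splits as `|aᵢbᵢ| pᵢ ≤ C (|aᵢ| qᵢ)(|bᵢ| qᵢ)`, and
the pointwise product of two nonnegative summable families is summable with sum at most the
product of the sums, since every term of a nonnegative summable family is bounded by its sum. -/

theorem summable_mul_and_tsum_mul_le_of_nonneg {I : Type*} {x y : I → ℝ}
    (hx0 : ∀ i, 0 ≤ x i) (hy0 : ∀ i, 0 ≤ y i) (hx : Summable x) (hy : Summable y) :
    (Summable fun i => x i * y i) ∧ ∑' i, x i * y i ≤ (∑' i, x i) * ∑' i, y i := by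
  have hbound : ∀ i, x i * y i ≤ x i * ∑' j, y j := fun i =>
    mul_le_mul_of_nonneg_left (hy.le_tsum i fun j _ => hy0 j) (hx0 i)
  have hdom : Summable fun i => x i * ∑' j, y j := hx.mul_right _
  have hxy : Summable fun i => x i * y i :=
    hdom.of_nonneg_of_le (fun i => mul_nonneg (hx0 i) (hy0 i)) hbound
  refine ⟨hxy, ?_⟩
  calc ∑' i, x i * y i ≤ ∑' i, x i * ∑' j, y j := hxy.tsum_le_tsum hbound hdom
    _ = (∑' i, x i) * ∑' i, y i := tsum_mul_right

theorem norm_mul_mul_le_of_le_mul_sq {R : Type*} [SeminormedRing R] {u v : R} {p q C : ℝ}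
    (hp : 0 ≤ p) (hpq : p ≤ C * q ^ 2) :
    ‖u * v‖ * p ≤ C * ((‖u‖ * q) * (‖v‖ * q)) :=
  calc ‖u * v‖ * p ≤ ‖u‖ * ‖v‖ * (C * q ^ 2) :=
        mul_le_mul (norm_mul_le u v) hpq hp (by positivity)
    _ = C * ((‖u‖ * q) * (‖v‖ * q)) := by ring

theorem kothe_mul_estimate_general {I : Type*} (P : Set (I → ℝ))
    (hP0 : ∀ p ∈ P, ∀ i, 0 ≤ p i)
    (hPP2 : ∀ p ∈ P, ∃ q ∈ P, ∃ C : ℝ, 0 < C ∧ ∀ i, p i ≤ C * (q i) ^ 2) :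
    ∀ p ∈ P, ∃ q ∈ P, ∃ C : ℝ, 0 < C ∧
      ∀ a b : I → ℂ,
        (∀ p' ∈ P, Summable fun i => ‖a i‖ * p' i) →
        (∀ p' ∈ P, Summable fun i => ‖b i‖ * p' i) →
        (Summable fun i => ‖a i * b i‖ * p i) ∧
        (∑' i, ‖a i * b i‖ * p i) ≤
          C * (∑' i, ‖a i‖ * q i) * (∑' i, ‖b i‖ * q i) := by
  intro p hp
  obtain ⟨q, hq, C, hC, hpq⟩ := hPP2 p hp
  refine ⟨q, hq, C, hC, fun a b ha hb => ?_⟩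
  obtain ⟨hab, hab_le⟩ := summable_mul_and_tsum_mul_le_of_nonneg
    (fun i => mul_nonneg (norm_nonneg (a i)) (hP0 q hq i))
    (fun i => mul_nonneg (norm_nonneg (b i)) (hP0 q hq i)) (ha q hq) (hb q hq)
  have hbound : ∀ i, ‖a i * b i‖ * p i ≤ C * ((‖a i‖ * q i) * (‖b i‖ * q i)) := fun i =>
    norm_mul_mul_le_of_le_mul_sq (hP0 p hp i) (hpq i)
  have hdom := hab.mul_left C
  have hsum : Summable fun i => ‖a i * b i‖ * p i :=
    hdom.of_nonneg_of_le (fun i => mul_nonneg (norm_nonneg _) (hP0 p hp i)) hbound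
  refine ⟨hsum, ?_⟩
  calc ∑' i, ‖a i * b i‖ * p i ≤ ∑' i, C * ((‖a i‖ * q i) * (‖b i‖ * q i)) :=
        hsum.tsum_le_tsum hbound hdom
    _ = C * ∑' i, (‖a i‖ * q i) * (‖b i‖ * q i) := tsum_mul_left
    _ ≤ C * ((∑' i, ‖a i‖ * q i) * ∑' i, ‖b i‖ * q i) := by gcongr
    _ = C * (∑' i, ‖a i‖ * q i) * (∑' i, ‖b i‖ * q i) := (mul_assoc _ _ _).symm

/-- If `P ≺ P²`, then for every `p ∈ P` there are `q ∈ P` and `C > 0` such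
that `∑ᵢ |aᵢbᵢ| pᵢ ≤ C (∑ᵢ |aᵢ| qᵢ)(∑ᵢ |bᵢ| qᵢ)` for all `a, b ∈ λ(P)`; in particular
`λ(P)` is closed under pointwise multiplication (and multiplication is jointly continuous
for the seminorms `‖·‖_p`). -/
theorem kothe_mul_estimate {I : Type*} (P : Set (I → ℝ))
    (hP0 : ∀ p ∈ P, ∀ i, 0 ≤ p i)
    (hP1 : ∀ i, ∃ p ∈ P, 0 < p i)
    (hP2 : ∀ p ∈ P, ∀ q ∈ P, ∃ r ∈ P, ∀ i, max (p i) (q i) ≤ r i)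
    (hPP2 : ∀ p ∈ P, ∃ q ∈ P, ∃ C : ℝ, 0 < C ∧ ∀ i, p i ≤ C * (q i) ^ 2) :
    ∀ p ∈ P, ∃ q ∈ P, ∃ C : ℝ, 0 < C ∧
      ∀ a b : I → ℂ,
        (∀ p' ∈ P, Summable fun i => ‖a i‖ * p' i) →
        (∀ p' ∈ P, Summable fun i => ‖b i‖ * p' i) →
        (Summable fun i => ‖a i * b i‖ * p i) ∧
        (∑' i, ‖a i * b i‖ * p i) ≤
          C * (∑' i, ‖a i‖ * q i) * (∑' i, ‖b i‖ * q i) :=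
  kothe_mul_estimate_general P hP0 hPP2
end

section
/- Let P be a Köthe set on a set I with P ≺ P², so that λ(P) is an algebra under pointwise multiplication. Then λ(P) has a multiplicative identity element if and only if ∑_{i∈I} p_i < ∞ for every p ∈ P (condition (U)); in that case the identity is the constant function 1 on I. -/
/-!
Any unit `e` of `λ(P)` is the constant `1`: each coordinate vector `δᵢ` lies in `λ(P)`, since
it has finite support, and `e δᵢ = δᵢ` forces `eᵢ = 1`. So a unit exists iff `1 ∈ λ(P)`,
which is condition (U).
-/

/-- Membership in the Köthe space `λ(P)`. -/
def MemKothe {I : Type*} (P : Set (I → ℝ)) (a : I → ℂ) : Prop :=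
  ∀ p ∈ P, Summable fun i => ‖a i‖ * p i

theorem memKothe_single {I : Type*} [DecidableEq I] (P : Set (I → ℝ)) (i : I) (c : ℂ) :
    MemKothe P (Pi.single i c) := fun p _ =>
  summable_of_ne_finset_zero (s := {i}) fun j hj => by
    simp [Finset.mem_singleton.not.mp hj]

theorem memKothe_const_one_iff {I : Type*} (P : Set (I → ℝ)) :
    MemKothe P (fun _ => 1) ↔ ∀ p ∈ P, Summable fun i => p i := by
  simp [MemKothe]

theorem eq_one_of_mul_eq_self_of_memKothe {I : Type*} (P : Set (I → ℝ)) (e : I → ℂ)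
    (he : ∀ a, MemKothe P a → (fun i => e i * a i) = a) : e = fun _ => 1 := by
  classical
  funext i
  simpa using congrFun (he _ (memKothe_single P i 1)) i

theorem kothe_unital_iff_general {I : Type*} (P : Set (I → ℝ)) :
    ((∃ e : I → ℂ, (∀ p ∈ P, Summable fun i => ‖e i‖ * p i) ∧
        ∀ a : I → ℂ, (∀ p ∈ P, Summable fun i => ‖a i‖ * p i) →
          (fun i => e i * a i) = a) ↔
      (∀ p ∈ P, Summable fun i => p i)) ∧
    ((∀ p ∈ P, Summable fun i => p i) →
      ((∀ p ∈ P, Summable fun i => ‖(1 : ℂ)‖ * p i) ∧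
        ∀ a : I → ℂ, (∀ p ∈ P, Summable fun i => ‖a i‖ * p i) →
          (fun i => (1 : ℂ) * a i) = a)) := by
  have one_is_unit : (∀ p ∈ P, Summable fun i => p i) →
      MemKothe P (fun _ => 1) ∧ ∀ a, MemKothe P a → (fun i => (1 : ℂ) * a i) = a :=
    fun hU => ⟨(memKothe_const_one_iff P).mpr hU, fun a _ => funext fun i => one_mul (a i)⟩
  refine ⟨⟨fun ⟨e, he, hunit⟩ => ?_, fun hU => ⟨_, one_is_unit hU⟩⟩, one_is_unit⟩
  obtain rfl := eq_one_of_mul_eq_self_of_memKothe P e hunit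
  exact (memKothe_const_one_iff P).mp he

/-- For a Köthe set `P` with `P ≺ P²`, the algebra `λ(P)` (with pointwise
multiplication) has a multiplicative identity iff `∑ᵢ pᵢ < ∞` for every `p ∈ P`
(condition (U)); in that case the identity is the constant function `1`. -/
theorem kothe_unital_iff {I : Type*} (P : Set (I → ℝ))
    (hP0 : ∀ p ∈ P, ∀ i, 0 ≤ p i)
    (hP1 : ∀ i, ∃ p ∈ P, 0 < p i)
    (hP2 : ∀ p ∈ P, ∀ q ∈ P, ∃ r ∈ P, ∀ i, max (p i) (q i) ≤ r i)
    (hPP2 : ∀ p ∈ P, ∃ q ∈ P, ∃ C : ℝ, 0 < C ∧ ∀ i, p i ≤ C * (q i) ^ 2) :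
    ((∃ e : I → ℂ, (∀ p ∈ P, Summable fun i => ‖e i‖ * p i) ∧
        ∀ a : I → ℂ, (∀ p ∈ P, Summable fun i => ‖a i‖ * p i) →
          (fun i => e i * a i) = a) ↔
      (∀ p ∈ P, Summable fun i => p i)) ∧
    ((∀ p ∈ P, Summable fun i => p i) →
      ((∀ p ∈ P, Summable fun i => ‖(1 : ℂ)‖ * p i) ∧
        ∀ a : I → ℂ, (∀ p ∈ P, Summable fun i => ‖a i‖ * p i) →
          (fun i => (1 : ℂ) * a i) = a)) :=
  kothe_unital_iff_general P
end

section
/- Fix 0 < R ≤ ∞ and a nondecreasing sequence α = (α_n)_{n∈ℕ} of positive real numbers with α_n → ∞, and let P = { (r^{α_n})_{n∈ℕ} : 0 < r < R } be the Köthe set defining the power series space Λ_R(α). Then P ≺ P² (equivalently, Λ_R(α) is an algebra under pointwise multiplication) if and only if R ≥ 1. -/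
open scoped ENNReal

private lemma my_rpow_tendsto {b : ℝ} (hb : 1 < b) :
    Filter.Tendsto (fun x : ℝ => b ^ x) Filter.atTop Filter.atTop := by
  simp_rw [Real.rpow_def_of_pos (by linarith : (0:ℝ) < b)]
  exact Real.tendsto_exp_atTop.comp <|
    Filter.Tendsto.const_mul_atTop (Real.log_pos hb) Filter.tendsto_id

/-- For `0 < R ≤ ∞` and a nondecreasing positive sequence `α` tending to `∞`,
the Köthe set `P = {(r^{α_n})_n : 0 < r < R}` of the power series space `Λ_R(α)`
satisfies `P ≺ P²` iff `R ≥ 1`. -/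
theorem power_series_space_algebra_iff (R : ℝ≥0∞) (hR : 0 < R)
    (α : ℕ → ℝ) (hαpos : ∀ n, 0 < α n) (hαmono : Monotone α)
    (hαtop : Filter.Tendsto α Filter.atTop Filter.atTop)
    (P : Set (ℕ → ℝ))
    (hP : P = {p | ∃ r : ℝ, 0 < r ∧ ENNReal.ofReal r < R ∧ p = fun n => r ^ α n}) :
    (∀ p ∈ P, ∃ q ∈ P, ∃ C : ℝ, 0 < C ∧ ∀ n, p n ≤ C * (q n) ^ 2) ↔ 1 ≤ R := by
  subst hP
  constructor
  · intro h
    by_contra hcon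
    push_neg at hcon
    have hRtop : R ≠ ⊤ := (hcon.trans_le le_top).ne
    set R' : ℝ := R.toReal with hR'def
    have hR'pos : 0 < R' := ENNReal.toReal_pos hR.ne' hRtop
    have hR'lt1 : R' < 1 := by
      have := (ENNReal.toReal_lt_toReal hRtop (by simp)).mpr hcon
      simpa using this
    have hRof : ENNReal.ofReal R' = R := ENNReal.ofReal_toReal hRtop
    set r : ℝ := (R' ^ 2 + R') / 2 with hrdef
    have hr2 : R' ^ 2 < R' := by nlinarith
    have hrpos : 0 < r := by positivity
    have hrltR' : r < R' := by nlinarith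
    have hR'2ltr : R' ^ 2 < r := by nlinarith
    have hrR : ENNReal.ofReal r < R := by
      rw [← hRof]; exact (ENNReal.ofReal_lt_ofReal_iff hR'pos).mpr hrltR'
    obtain ⟨q, hqP, C, hC, hle⟩ := h (fun n => r ^ α n) ⟨r, hrpos, hrR, rfl⟩
    obtain ⟨s, hs, hsR, rfl⟩ := hqP
    have hsltR' : s < R' := by
      rw [← hRof] at hsR
      exact (ENNReal.ofReal_lt_ofReal_iff hR'pos).mp hsR
    have hs2 : s ^ 2 < r := by nlinarith
    set t : ℝ := r / s ^ 2 with htdef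
    have hs2pos : 0 < s ^ 2 := by positivity
    have ht : 1 < t := (one_lt_div hs2pos).mpr hs2
    obtain ⟨n, hn⟩ : ∃ n, C < t ^ α n := by
      have := (my_rpow_tendsto ht).comp hαtop
      obtain ⟨n, hn⟩ := (Filter.tendsto_atTop.mp this (C + 1)).exists
      exact ⟨n, lt_of_lt_of_le (lt_add_one C) hn⟩
    have key : r ^ α n = t ^ α n * (s ^ 2) ^ α n := by
      rw [← Real.mul_rpow (by positivity) (by positivity), div_mul_cancel₀]
      exact hs2pos.ne'
    have hsq : ((s : ℝ) ^ α n) ^ 2 = (s ^ 2) ^ α n := by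
      rw [← Real.rpow_natCast (s ^ α n) 2, ← Real.rpow_mul hs.le,
        ← Real.rpow_natCast s 2, ← Real.rpow_mul hs.le, mul_comm]
    have hle' := hle n
    rw [hsq, key] at hle'
    have hs2pow : 0 < (s ^ 2) ^ α n := Real.rpow_pos_of_pos hs2pos _
    have : t ^ α n ≤ C := le_of_mul_le_mul_right hle' hs2pow
    exact absurd this (not_le.mpr hn)
  · intro hR1 p hp
    obtain ⟨r, hr, hrR, rfl⟩ := hp
    set s : ℝ := Real.sqrt r with hsdef
    have hspos : 0 < s := Real.sqrt_pos.mpr hr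
    have hsR : ENNReal.ofReal s < R := by
      rcases lt_or_ge r 1 with h1 | h1
      · have hs1 : s < 1 := by
          rw [hsdef, show (1:ℝ) = Real.sqrt 1 by simp]
          exact Real.sqrt_lt_sqrt hr.le h1
        calc ENNReal.ofReal s < 1 := by
              rw [← ENNReal.ofReal_one]
              exact (ENNReal.ofReal_lt_ofReal_iff one_pos).mpr hs1
          _ ≤ R := hR1
      · have hs1 : 1 ≤ s := Real.one_le_sqrt.mpr h1
        have hsr : s ≤ r := by nlinarith [Real.sq_sqrt hr.le]
        calc ENNReal.ofReal s ≤ ENNReal.ofReal r := ENNReal.ofReal_le_ofReal hsr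
          _ < R := hrR
    refine ⟨fun n => s ^ α n, ⟨s, hspos, hsR, rfl⟩, 1, one_pos, fun n => ?_⟩
    have hsq : ((s : ℝ) ^ α n) ^ 2 = (s ^ 2) ^ α n := by
      rw [← Real.rpow_natCast (s ^ α n) 2, ← Real.rpow_mul hspos.le,
        ← Real.rpow_natCast s 2, ← Real.rpow_mul hspos.le, mul_comm]
    rw [one_mul, hsq, hsdef, Real.sq_sqrt hr.le]
end

section
/- Fix 0 < R ≤ ∞ and a nondecreasing sequence α = (α_n)_{n∈ℕ} of positive real numbers with α_n → ∞, and let P = { (r^{α_n})_{n∈ℕ} : 0 < r < R } be the Köthe set defining the power series space Λ_R(α). Then P ∼ P² (condition (B), equivalent to biprojectivity of Λ_R(α)) if and only if R = 1 or R = ∞. -/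
open scoped ENNReal

private lemma aux_rpow_false (α : ℕ → ℝ)
    (hαtop : Filter.Tendsto α Filter.atTop Filter.atTop)
    {a b C : ℝ} (hb : 0 < b) (hba : b < a)
    (h : ∀ n, a ^ α n ≤ C * b ^ α n) : False := by
  have ha : 0 < a := hb.trans hba
  have h1 : 1 < a / b := (one_lt_div hb).2 hba
  have hlog : 0 < Real.log (a / b) := Real.log_pos h1
  have htend : Filter.Tendsto (fun n => (a / b) ^ α n) Filter.atTop Filter.atTop := by
    have h2 : Filter.Tendsto (fun n => Real.log (a / b) * α n) Filter.atTop Filter.atTop :=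
      (hαtop.const_mul_atTop hlog)
    have h3 := Real.tendsto_exp_atTop.comp h2
    refine h3.congr fun n => ?_
    simp [Function.comp, Real.rpow_def_of_pos (by positivity : (0:ℝ) < a / b)]
  obtain ⟨n, hn⟩ := (htend.eventually_gt_atTop C).exists
  have hbpos : 0 < b ^ α n := Real.rpow_pos_of_pos hb _
  have : a ^ α n / b ^ α n > C := by
    rwa [← Real.div_rpow ha.le hb.le]
  have : C * b ^ α n < a ^ α n := by
    rw [← lt_div_iff₀ hbpos] at *
    linarith [this]
  exact absurd (h n) (not_le.2 this)

/-- For `0 < R ≤ ∞` and a nondecreasing positive sequence `α` tending to `∞`,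
the Köthe set `P = {(r^{α_n})_n : 0 < r < R}` of `Λ_R(α)` satisfies `P ∼ P²`
(condition (B)) iff `R = 1` or `R = ∞`. -/
theorem power_series_space_biprojective_iff (R : ℝ≥0∞) (hR : 0 < R)
    (α : ℕ → ℝ) (hαpos : ∀ n, 0 < α n) (hαmono : Monotone α)
    (hαtop : Filter.Tendsto α Filter.atTop Filter.atTop)
    (P : Set (ℕ → ℝ))
    (hP : P = {p | ∃ r : ℝ, 0 < r ∧ ENNReal.ofReal r < R ∧ p = fun n => r ^ α n}) :
    ((∀ p ∈ P, ∃ q ∈ P, ∃ q' ∈ P, ∃ C : ℝ, 0 < C ∧ ∀ n, p n ≤ C * (q n * q' n)) ∧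
     (∀ q ∈ P, ∀ q' ∈ P, ∃ p ∈ P, ∃ C : ℝ, 0 < C ∧ ∀ n, q n * q' n ≤ C * p n)) ↔
    (R = 1 ∨ R = ⊤) := by
  subst hP
  constructor
  · rintro ⟨h1, h2⟩
    by_contra hcon
    push_neg at hcon
    obtain ⟨hR1, hRtop⟩ := hcon
    set Rr := R.toReal with hRrdef
    have hRr0 : 0 < Rr := ENNReal.toReal_pos hR.ne' hRtop
    have hRR : R = ENNReal.ofReal Rr := by
      rw [hRrdef, ENNReal.ofReal_toReal hRtop]
    have hmem : ∀ t : ℝ, 0 ≤ t → t < Rr → ENNReal.ofReal t < R := by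
      intro t ht htR
      rw [hRR]
      exact (ENNReal.ofReal_lt_ofReal_iff hRr0).2 htR
    have hmem' : ∀ t : ℝ, 0 ≤ t → ENNReal.ofReal t < R → t < Rr := by
      intro t ht htR
      exact (ENNReal.ofReal_lt_iff_lt_toReal ht hRtop).1 htR
    have hRrne1 : Rr ≠ 1 := by
      intro h
      apply hR1
      rw [hRR, h, ENNReal.ofReal_one]
    rcases lt_or_gt_of_ne hRrne1 with hlt | hgt
    · -- Rr < 1 : condition (i) fails for r = Rr * Rr
      have hrr : Rr * Rr < Rr := by nlinarith
      obtain ⟨q, ⟨t, ht0, htR, rfl⟩, q', ⟨t', ht'0, ht'R, rfl⟩, C, hC0, hCb⟩ :=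
        h1 (fun n => (Rr * Rr) ^ α n)
          ⟨Rr * Rr, by positivity, hmem _ (by positivity) hrr, rfl⟩
      have htRr : t < Rr := hmem' t ht0.le htR
      have ht'Rr : t' < Rr := hmem' t' ht'0.le ht'R
      have hlt2 : t * t' < Rr * Rr := by nlinarith
      refine aux_rpow_false α hαtop (C := C) (by positivity : (0:ℝ) < t * t') hlt2
        fun n => ?_
      rw [Real.mul_rpow ht0.le ht'0.le]
      exact hCb n
    · -- 1 < Rr : condition (ii) fails for q = q' = sqrt Rr
      set s := Real.sqrt Rr with hsdef
      have hs0 : 0 < s := Real.sqrt_pos.2 hRr0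
      have hsR : s < Rr := by
        have h4 := Real.sqrt_lt_sqrt hRr0.le (by nlinarith : Rr < Rr * Rr)
        rwa [Real.sqrt_mul_self hRr0.le] at h4
      obtain ⟨p, ⟨u, hu0, huR, rfl⟩, C, hC0, hCb⟩ :=
        h2 (fun n => s ^ α n) ⟨s, hs0, hmem _ hs0.le hsR, rfl⟩
          (fun n => s ^ α n) ⟨s, hs0, hmem _ hs0.le hsR, rfl⟩
      have huRr : u < Rr := hmem' u hu0.le huR
      refine aux_rpow_false α hαtop (C := C) hu0 huRr fun n => ?_
      have := hCb n
      rwa [← Real.mul_rpow hs0.le hs0.le, Real.mul_self_sqrt hRr0.le] at this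
  · rintro (rfl | rfl)
    · -- R = 1
      constructor
      · rintro p ⟨r, hr0, hrR, rfl⟩
        have hr1 : r < 1 := ENNReal.ofReal_lt_one.1 hrR
        set t := Real.sqrt r with htdef
        have ht0 : 0 < t := Real.sqrt_pos.2 hr0
        have ht1 : t < 1 := by
          have := Real.sqrt_lt_sqrt hr0.le hr1
          rwa [Real.sqrt_one] at this
        refine ⟨fun n => t ^ α n, ⟨t, ht0, ENNReal.ofReal_lt_one.2 ht1, rfl⟩,
          fun n => t ^ α n, ⟨t, ht0, ENNReal.ofReal_lt_one.2 ht1, rfl⟩, 1, one_pos,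
          fun n => ?_⟩
        rw [one_mul, ← Real.mul_rpow ht0.le ht0.le, Real.mul_self_sqrt hr0.le]
      · rintro q ⟨t, ht0, htR, rfl⟩ q' ⟨t', ht'0, ht'R, rfl⟩
        have ht1 : t < 1 := ENNReal.ofReal_lt_one.1 htR
        have ht'1 : t' < 1 := ENNReal.ofReal_lt_one.1 ht'R
        have htt' : t * t' < 1 := by nlinarith
        refine ⟨fun n => (t * t') ^ α n,
          ⟨t * t', by positivity, ENNReal.ofReal_lt_one.2 htt', rfl⟩, 1, one_pos,
          fun n => ?_⟩
        show t ^ α n * t' ^ α n ≤ 1 * (t * t') ^ α n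
        rw [one_mul, Real.mul_rpow ht0.le ht'0.le]
    · -- R = ⊤
      constructor
      · rintro p ⟨r, hr0, hrR, rfl⟩
        refine ⟨fun n => (max r 1) ^ α n,
          ⟨max r 1, by positivity, ENNReal.ofReal_lt_top, rfl⟩,
          fun n => (1:ℝ) ^ α n, ⟨1, one_pos, ENNReal.ofReal_lt_top, rfl⟩, 1, one_pos,
          fun n => ?_⟩
        show r ^ α n ≤ 1 * (max r 1 ^ α n * (1:ℝ) ^ α n)
        rw [one_mul, Real.one_rpow, mul_one]
        exact Real.rpow_le_rpow hr0.le (le_max_left _ _) (hαpos n).le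
      · rintro q ⟨t, ht0, htR, rfl⟩ q' ⟨t', ht'0, ht'R, rfl⟩
        refine ⟨fun n => (t * t') ^ α n,
          ⟨t * t', by positivity, ENNReal.ofReal_lt_top, rfl⟩, 1, one_pos, fun n => ?_⟩
        show t ^ α n * t' ^ α n ≤ 1 * (t * t') ^ α n
        rw [one_mul, Real.mul_rpow ht0.le ht'0.le]
end

section
/- Let P be a Köthe set on ℕ such that either every p ∈ P is nondecreasing (p_n ≤ p_{n+1} for all n) or every p ∈ P is nonincreasing (p_{n+1} ≤ p_n for all n). Then P satisfies condition (M): there exist complex matrices α = (α_{ij})_{i,j∈ℕ} and β = (β_{ij})_{i,j∈ℕ} such that (M1) α_{ij} + β_{ij} = 1 for all i, j; (M2) for every p ∈ P there exist C > 0 and q ∈ P such that sup_i |α_{ij}| p_i p_j ≤ C q_j² for all j; and (M3) for every p ∈ P there exist C > 0 and q ∈ P such that sup_j |β_{ij}| p_j p_i ≤ C q_i² for all i. -/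
/-!
Take α and β to be the indicator matrices of the upper triangle `i ≤ j` and of the strict
lower triangle `j < i`. When every weight is nondecreasing, `α i j ≠ 0` forces `p i ≤ p j`,
so `|α i j| p i p j ≤ (p j)²`, and symmetrically for β; hence (M2) and (M3) hold with `C = 1`
and `q = p`. The nonincreasing case is the same statement for the reversed order on `ℕ`.
-/

def KotheConditionM {ι : Type*} (P : Set (ι → ℝ)) : Prop :=
  ∃ α β : ι → ι → ℂ,
    (∀ i j, α i j + β i j = 1) ∧
    (∀ p ∈ P, ∃ C : ℝ, 0 < C ∧ ∃ q ∈ P, ∀ j, ∀ i, ‖α i j‖ * p i * p j ≤ C * (q j) ^ 2) ∧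
    (∀ p ∈ P, ∃ C : ℝ, 0 < C ∧ ∃ q ∈ P, ∀ i, ∀ j, ‖β i j‖ * p j * p i ≤ C * (q i) ^ 2)

lemma norm_ite_one_zero_mul_mul_le {c : Prop} [Decidable c] {a b : ℝ} (h : c → a ≤ b)
    (hb : 0 ≤ b) : ‖(if c then 1 else 0 : ℂ)‖ * a * b ≤ b ^ 2 := by
  split_ifs with hc
  · simpa [sq] using mul_le_mul_of_nonneg_right (h hc) hb
  · simpa using sq_nonneg b

theorem kotheConditionM_of_monotone {ι : Type*} [LinearOrder ι] (P : Set (ι → ℝ))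
    (hP0 : ∀ p ∈ P, ∀ n, 0 ≤ p n) (hmono : ∀ p ∈ P, Monotone p) : KotheConditionM P := by
  refine ⟨fun i j => if i ≤ j then 1 else 0, fun i j => if j < i then 1 else 0,
    fun i j => ?_, fun p hp => ⟨1, one_pos, p, hp, fun j i => ?_⟩,
    fun p hp => ⟨1, one_pos, p, hp, fun i j => ?_⟩⟩
  · rcases le_or_gt i j with hij | hji
    · simp [hij, hij.not_gt]
    · simp [hji, hji.not_ge]
  · rw [one_mul]
    exact norm_ite_one_zero_mul_mul_le (fun hij => hmono p hp hij) (hP0 p hp j)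
  · rw [one_mul]
    exact norm_ite_one_zero_mul_mul_le (fun hji => hmono p hp hji.le) (hP0 p hp i)

theorem kothe_condition_M_of_monotone_general (P : Set (ℕ → ℝ))
    (hP0 : ∀ p ∈ P, ∀ n, 0 ≤ p n)
    (hmono : (∀ p ∈ P, Monotone p) ∨ (∀ p ∈ P, Antitone p)) :
    ∃ α β : ℕ → ℕ → ℂ,
      (∀ i j, α i j + β i j = 1) ∧
      (∀ p ∈ P, ∃ C : ℝ, 0 < C ∧ ∃ q ∈ P, ∀ j, ∀ i,
        ‖α i j‖ * p i * p j ≤ C * (q j) ^ 2) ∧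
      (∀ p ∈ P, ∃ C : ℝ, 0 < C ∧ ∃ q ∈ P, ∀ i, ∀ j,
        ‖β i j‖ * p j * p i ≤ C * (q i) ^ 2) := by
  rcases hmono with hmono | hanti
  · exact kotheConditionM_of_monotone P hP0 hmono
  · exact kotheConditionM_of_monotone (ι := ℕᵒᵈ) P hP0 fun p hp => (hanti p hp).dual_left

/-- A Köthe set on `ℕ` all of whose elements are nondecreasing, or all of
whose elements are nonincreasing, satisfies condition (M). -/
theorem kothe_condition_M_of_monotone (P : Set (ℕ → ℝ))
    (hP0 : ∀ p ∈ P, ∀ n, 0 ≤ p n)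
    (hP1 : ∀ n, ∃ p ∈ P, 0 < p n)
    (hP2 : ∀ p ∈ P, ∀ q ∈ P, ∃ r ∈ P, ∀ n, max (p n) (q n) ≤ r n)
    (hmono : (∀ p ∈ P, Monotone p) ∨ (∀ p ∈ P, Antitone p)) :
    ∃ α β : ℕ → ℕ → ℂ,
      (∀ i j, α i j + β i j = 1) ∧
      (∀ p ∈ P, ∃ C : ℝ, 0 < C ∧ ∃ q ∈ P, ∀ j, ∀ i,
        ‖α i j‖ * p i * p j ≤ C * (q j) ^ 2) ∧
      (∀ p ∈ P, ∃ C : ℝ, 0 < C ∧ ∃ q ∈ P, ∀ i, ∀ j,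
        ‖β i j‖ * p j * p i ≤ C * (q i) ^ 2) :=
  kothe_condition_M_of_monotone_general P hP0 hmono
end

section
/- Let P be a Köthe set on a set I with P ≺ P², and for p ∈ P define p̄ by p̄_i = min{p_i, 1}, and let P̄ = { p̄ : p ∈ P }. Then for every a ∈ λ(P) and x ∈ λ(P̄), the pointwise product a·x = (a_i x_i)_{i∈I} belongs to λ(P̄); more precisely, for every p ∈ P there exist q ∈ P and C > 0 such that ∑_{i∈I} |a_i x_i| p̄_i ≤ C (∑_{i∈I} |a_i| q_i)(∑_{i∈I} |x_i| q̄_i) for all a ∈ λ(P) and x ∈ λ(P̄). -/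
/-!
Since `P ≺ P²` (with `C ≥ 1`), every `p̄ᵢ` is dominated by `C qᵢ q̄ᵢ`: where `qᵢ ≤ 1` this is `pᵢ ≤ C qᵢ²`, and
where `qᵢ > 1` it is `p̄ᵢ ≤ 1 ≤ C qᵢ`. Bounding `|aᵢ| qᵢ` by `∑ⱼ |aⱼ| qⱼ` then gives
`∑ᵢ |aᵢ xᵢ| p̄ᵢ ≤ C (∑ᵢ |aᵢ| qᵢ)(∑ᵢ |xᵢ| q̄ᵢ)`.
-/

lemma min_one_le_mul_mul_min_one {p q C : ℝ} (hC : 1 ≤ C) (hpq : p ≤ C * q ^ 2) :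
    min p 1 ≤ C * (q * min q 1) := by
  rcases le_total q 1 with h | h
  · rw [min_eq_left h, ← sq]
    exact (min_le_left _ _).trans hpq
  · rw [min_eq_right h, mul_one]
    exact (min_le_right _ _).trans (one_le_mul_of_one_le_of_one_le hC h)

lemma summable_and_tsum_le_mul_tsum_mul_tsum {I : Type*} {u b c : I → ℝ} {K : ℝ} (hK : 0 ≤ K)
    (hu : ∀ i, 0 ≤ u i) (hb0 : ∀ i, 0 ≤ b i) (hc0 : ∀ i, 0 ≤ c i)
    (hb : Summable b) (hc : Summable c) (hubc : ∀ i, u i ≤ K * (b i * c i)) :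
    Summable u ∧ ∑' i, u i ≤ K * (∑' i, b i) * ∑' i, c i := by
  have hle : ∀ i, u i ≤ K * (∑' j, b j) * c i := fun i =>
    calc u i ≤ K * (b i * c i) := hubc i
      _ ≤ K * ((∑' j, b j) * c i) := by
        gcongr
        · exact hc0 i
        · exact hb.le_tsum i fun j _ => hb0 j
      _ = K * (∑' j, b j) * c i := by ring
  have hu_sum : Summable u := .of_nonneg_of_le hu hle (hc.mul_left _)
  refine ⟨hu_sum, ?_⟩
  calc ∑' i, u i ≤ ∑' i, K * (∑' j, b j) * c i := hu_sum.tsum_le_tsum hle (hc.mul_left _)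
    _ = K * (∑' i, b i) * ∑' i, c i := tsum_mul_left

theorem kothe_barP_module_general {I : Type*} (P : Set (I → ℝ))
    (hP0 : ∀ p ∈ P, ∀ i, 0 ≤ p i)
    (hPP2 : ∀ p ∈ P, ∃ q ∈ P, ∃ C : ℝ, 0 < C ∧ ∀ i, p i ≤ C * (q i) ^ 2) :
    ∀ p ∈ P, ∃ q ∈ P, ∃ C : ℝ, 0 < C ∧
      ∀ a x : I → ℂ,
        (∀ p' ∈ P, Summable fun i => ‖a i‖ * p' i) →
        (∀ p' ∈ P, Summable fun i => ‖x i‖ * min (p' i) 1) →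
        (Summable fun i => ‖a i * x i‖ * min (p i) 1) ∧
        (∑' i, ‖a i * x i‖ * min (p i) 1) ≤
          C * (∑' i, ‖a i‖ * q i) * (∑' i, ‖x i‖ * min (q i) 1) := by
  intro p hp
  obtain ⟨q, hq, C, -, hpq⟩ := hPP2 p hp
  refine ⟨q, hq, max C 1, by positivity, fun a x ha hx => ?_⟩
  have hq0 := hP0 q hq
  refine summable_and_tsum_le_mul_tsum_mul_tsum (by positivity)
    (fun i => mul_nonneg (norm_nonneg _) (le_min (hP0 p hp i) zero_le_one))
    (fun i => mul_nonneg (norm_nonneg _) (hq0 i))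
    (fun i => mul_nonneg (norm_nonneg _) (le_min (hq0 i) zero_le_one))
    (ha q hq) (hx q hq) fun i => ?_
  calc ‖a i * x i‖ * min (p i) 1 = ‖a i‖ * ‖x i‖ * min (p i) 1 := by rw [norm_mul]
    _ ≤ ‖a i‖ * ‖x i‖ * (max C 1 * (q i * min (q i) 1)) := by
      gcongr
      exact min_one_le_mul_mul_min_one (le_max_right _ _)
        ((hpq i).trans (by gcongr; exact le_max_left _ _))
    _ = max C 1 * (‖a i‖ * q i * (‖x i‖ * min (q i) 1)) := by ring

/-- If `P ≺ P²` and `p̄ᵢ = min{pᵢ, 1}`, then pointwise products of elements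
of `λ(P)` with elements of `λ(P̄)` lie in `λ(P̄)`, with the quantitative estimate
`∑ᵢ |aᵢxᵢ| p̄ᵢ ≤ C (∑ᵢ |aᵢ| qᵢ)(∑ᵢ |xᵢ| q̄ᵢ)`. -/
theorem kothe_barP_module {I : Type*} (P : Set (I → ℝ))
    (hP0 : ∀ p ∈ P, ∀ i, 0 ≤ p i)
    (hP1 : ∀ i, ∃ p ∈ P, 0 < p i)
    (hP2 : ∀ p ∈ P, ∀ q ∈ P, ∃ r ∈ P, ∀ i, max (p i) (q i) ≤ r i)
    (hPP2 : ∀ p ∈ P, ∃ q ∈ P, ∃ C : ℝ, 0 < C ∧ ∀ i, p i ≤ C * (q i) ^ 2) :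
    ∀ p ∈ P, ∃ q ∈ P, ∃ C : ℝ, 0 < C ∧
      ∀ a x : I → ℂ,
        (∀ p' ∈ P, Summable fun i => ‖a i‖ * p' i) →
        (∀ p' ∈ P, Summable fun i => ‖x i‖ * min (p' i) 1) →
        (Summable fun i => ‖a i * x i‖ * min (p i) 1) ∧
        (∑' i, ‖a i * x i‖ * min (p i) 1) ≤
          C * (∑' i, ‖a i‖ * q i) * (∑' i, ‖x i‖ * min (q i) 1) :=
  kothe_barP_module_general P hP0 hPP2
end

section
/- Let P be a Köthe set on ℕ such that P ∼ P² (condition (B)) and p_n ≥ 1 for all p ∈ P and all n ∈ ℕ. Suppose there exist p ∈ P and k ∈ ℕ such that n ≤ p_n^k for all n ∈ ℕ (equivalently, sup_n (log n)/(log p_n) < ∞ for some p ∈ P). Then P satisfies condition (N): for every p ∈ P there exist q ∈ P and α ∈ ℓ¹(ℕ) with p_n ≤ α_n q_n for all n; equivalently, λ(P) is nuclear. -/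
/-!
Since `P` is directed and every `r²` is dominated by a member of `P` (`q q' ≤ r² ≤ C s`), the
sequences bounded by a constant times a member of `P` are closed under products. Hence `P` also
dominates `p · p₀^(2k) ≥ p · n²` for the `p₀` of the growth hypothesis, and if `p n · n² ≤ C q n`
then `α := p / q` is bounded by `C / n²`, hence summable.
-/

def IsDominatedBy (P : Set (ℕ → ℝ)) (f : ℕ → ℝ) : Prop :=
  ∃ q ∈ P, ∃ C : ℝ, 0 ≤ C ∧ ∀ n, f n ≤ C * q n

namespace IsDominatedBy

variable {P : Set (ℕ → ℝ)} {f g : ℕ → ℝ}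

lemma of_mem {p : ℕ → ℝ} (hp : p ∈ P) : IsDominatedBy P p :=
  ⟨p, hp, 1, zero_le_one, fun n => (one_mul (p n)).ge⟩

lemma mono (hg : IsDominatedBy P g) (hfg : ∀ n, f n ≤ g n) : IsDominatedBy P f := by
  obtain ⟨q, hq, C, hC, hgq⟩ := hg
  exact ⟨q, hq, C, hC, fun n => (hfg n).trans (hgq n)⟩

lemma mul (hP2 : ∀ p ∈ P, ∀ q ∈ P, ∃ r ∈ P, ∀ n, max (p n) (q n) ≤ r n)
    (hB2 : ∀ q ∈ P, ∃ p ∈ P, ∃ C : ℝ, 0 < C ∧ ∀ n, (q n) ^ 2 ≤ C * p n)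
    (hP0 : ∀ p ∈ P, ∀ n, 0 ≤ p n) (hf0 : ∀ n, 0 ≤ f n) (hg0 : ∀ n, 0 ≤ g n)
    (hf : IsDominatedBy P f) (hg : IsDominatedBy P g) :
    IsDominatedBy P fun n => f n * g n := by
  obtain ⟨q, hq, C, hC, hfq⟩ := hf
  obtain ⟨q', hq', C', hC', hgq'⟩ := hg
  obtain ⟨r, hr, hqr⟩ := hP2 q hq q' hq'
  obtain ⟨s, hs, D, hD, hrs⟩ := hB2 r hr
  refine ⟨s, hs, C * C' * D, by positivity, fun n => ?_⟩
  have hqq' : q n * q' n ≤ r n ^ 2 := by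
    rw [sq]
    exact mul_le_mul (le_of_max_le_left (hqr n)) (le_of_max_le_right (hqr n))
      (hP0 q' hq' n) ((hP0 q hq n).trans (le_of_max_le_left (hqr n)))
  calc f n * g n ≤ (C * q n) * (C' * q' n) :=
        mul_le_mul (hfq n) (hgq' n) (hg0 n) ((hf0 n).trans (hfq n))
    _ = C * C' * (q n * q' n) := by ring
    _ ≤ C * C' * (D * s n) := mul_le_mul_of_nonneg_left (hqq'.trans (hrs n)) (by positivity)
    _ = C * C' * D * s n := by ring

lemma mul_pow (hP2 : ∀ p ∈ P, ∀ q ∈ P, ∃ r ∈ P, ∀ n, max (p n) (q n) ≤ r n)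
    (hB2 : ∀ q ∈ P, ∃ p ∈ P, ∃ C : ℝ, 0 < C ∧ ∀ n, (q n) ^ 2 ≤ C * p n)
    (hP0 : ∀ p ∈ P, ∀ n, 0 ≤ p n) (hf0 : ∀ n, 0 ≤ f n) (hf : IsDominatedBy P f)
    {p : ℕ → ℝ} (hp : p ∈ P) (j : ℕ) :
    IsDominatedBy P fun n => f n * p n ^ j := by
  induction j with
  | zero => simpa using hf
  | succ j ih =>
    simp_rw [pow_succ, ← mul_assoc]
    exact ih.mul hP2 hB2 hP0 (fun n => mul_nonneg (hf0 n) (pow_nonneg (hP0 p hp n) j)) (hP0 p hp) (of_mem hp)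

end IsDominatedBy

lemma summable_abs_div_of_mul_sq_le {a b : ℕ → ℝ} {C : ℝ} (ha : ∀ n, 0 ≤ a n)
    (hb : ∀ n, 0 < b n) (hab : ∀ n, a n * (n : ℝ) ^ 2 ≤ C * b n) :
    Summable fun n => |a n / b n| := by
  refine .of_norm_bounded_eventually_nat ((Real.summable_nat_pow_inv.2 one_lt_two).mul_left C) ?_
  filter_upwards [Filter.eventually_ge_atTop 1] with n hn
  have hn2 : (0 : ℝ) < (n : ℝ) ^ 2 := by positivity
  rw [Real.norm_eq_abs, abs_abs, abs_of_nonneg (div_nonneg (ha n) (hb n).le),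
    div_le_iff₀ (hb n), ← div_eq_mul_inv, div_mul_eq_mul_div, le_div_iff₀ hn2]
  exact hab n

theorem kothe_nuclear_of_log_condition_general (P : Set (ℕ → ℝ))
    (hP2 : ∀ p ∈ P, ∀ q ∈ P, ∃ r ∈ P, ∀ n, max (p n) (q n) ≤ r n)
    (hB2 : ∀ q ∈ P, ∃ p ∈ P, ∃ C : ℝ, 0 < C ∧ ∀ n, (q n) ^ 2 ≤ C * p n)
    (hge1 : ∀ p ∈ P, ∀ n, 1 ≤ p n)
    (hlog : ∃ p ∈ P, ∃ k : ℕ, ∀ n : ℕ, (n : ℝ) ≤ (p n) ^ k) :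
    ∀ p ∈ P, ∃ q ∈ P, ∃ α : ℕ → ℝ, (Summable fun n => |α n|) ∧
      ∀ n, p n ≤ α n * q n := by
  intro p hp
  obtain ⟨p₀, hp₀, k, hk⟩ := hlog
  have hP0 : ∀ q ∈ P, ∀ n, 0 ≤ q n := fun q hq n => zero_le_one.trans (hge1 q hq n)
  have hsq : ∀ n : ℕ, (n : ℝ) ^ 2 ≤ p₀ n ^ (k * 2) := fun n => by
    rw [pow_mul]
    exact pow_le_pow_left₀ n.cast_nonneg (hk n) 2
  obtain ⟨q, hq, C, -, hpq⟩ : IsDominatedBy P fun n => p n * (n : ℝ) ^ 2 :=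
    ((IsDominatedBy.of_mem hp).mul_pow hP2 hB2 hP0 (hP0 p hp) hp₀ (k * 2)).mono
      fun n => mul_le_mul_of_nonneg_left (hsq n) (hP0 p hp n)
  have hq0 : ∀ n, 0 < q n := fun n => zero_lt_one.trans_le (hge1 q hq n)
  exact ⟨q, hq, fun n => p n / q n, summable_abs_div_of_mul_sq_le (hP0 p hp) hq0 hpq,
    fun n => (div_mul_cancel₀ _ (hq0 n).ne').ge⟩

/-- Let `P` be a Köthe set on `ℕ` satisfying condition (B) (`P ∼ P²`) and
`pₙ ≥ 1` for all `p ∈ P`, `n`. If there are `p ∈ P` and `k ∈ ℕ` with `n ≤ pₙ^k` for all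
`n`, then `P` satisfies condition (N), i.e. `λ(P)` is nuclear. -/
theorem kothe_nuclear_of_log_condition (P : Set (ℕ → ℝ))
    (hP1 : ∀ n, ∃ p ∈ P, 0 < p n)
    (hP2 : ∀ p ∈ P, ∀ q ∈ P, ∃ r ∈ P, ∀ n, max (p n) (q n) ≤ r n)
    (hB1 : ∀ p ∈ P, ∃ q ∈ P, ∃ C : ℝ, 0 < C ∧ ∀ n, p n ≤ C * (q n) ^ 2)
    (hB2 : ∀ q ∈ P, ∃ p ∈ P, ∃ C : ℝ, 0 < C ∧ ∀ n, (q n) ^ 2 ≤ C * p n)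
    (hge1 : ∀ p ∈ P, ∀ n, 1 ≤ p n)
    (hlog : ∃ p ∈ P, ∃ k : ℕ, ∀ n : ℕ, (n : ℝ) ≤ (p n) ^ k) :
    ∀ p ∈ P, ∃ q ∈ P, ∃ α : ℕ → ℝ, (Summable fun n => |α n|) ∧
      ∀ n, p n ≤ α n * q n :=
  kothe_nuclear_of_log_condition_general P hP2 hB2 hge1 hlog
end

section
/- Let P be a Köthe set on a set I satisfying condition (B) (P ∼ P²) and condition (N). Then for every a ∈ λ(P), every p ∈ P, and every ε > 0, there exists a finite subset J ⊆ I such that (sup_{i ∈ I∖J} |a_i| p_i) · (1 + sup_{j ∈ J} p_j) < ε. -/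
/-!
Applying (B) twice gives `u ∈ P` and `C` with `pᵢ⁴ ≤ C uᵢ`, so `|aᵢ| pᵢ⁴ ≤ C ∑ⱼ |aⱼ| uⱼ =: B` is
bounded. Take `J = {i : η ≤ |aᵢ| pᵢ}`, finite since `|a| p` is summable. Off `J` the first factor
is at most `η`, while on `J` we get `η pⱼ³ ≤ |aⱼ| pⱼ⁴ ≤ B`, so `pⱼ ≤ (B / η)^(1/3)`; and
`η (1 + (B / η)^(1/3)) → 0` as `η → 0`.
-/

open Filter Topology

lemma exists_pos_le_mul_pow_and_mul_one_add_lt {m : ℕ} (hm : 2 ≤ m) (B : ℝ) {ε : ℝ} (hε : 0 < ε) :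
    ∃ η > 0, ∃ t ≥ 0, B ≤ η * t ^ m ∧ η * (1 + t) < ε := by
  set K := |B| + 1
  have hK : 0 < K := by positivity
  set t := 2 * K / ε + 1
  have ht : 1 ≤ t := by simp only [t]; linarith [div_pos (mul_pos two_pos hK) hε]
  have htm : 0 < t ^ m := by positivity
  have hεt : 2 * K < ε * t := by
    have : ε * t = 2 * K + ε := by simp only [t]; field_simp
    linarith
  refine ⟨K / t ^ m, div_pos hK htm, t, by linarith, ?_, ?_⟩
  · rw [div_mul_cancel₀ _ htm.ne']
    linarith [le_abs_self B]
  · rw [div_mul_eq_mul_div, div_lt_iff₀ htm]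
    calc K * (1 + t) ≤ 2 * K * t := by nlinarith
      _ < ε * t * t := by gcongr
      _ = ε * t ^ 2 := by ring
      _ ≤ ε * t ^ m := mul_le_mul_of_nonneg_left (pow_le_pow_right₀ ht hm) hε.le

theorem exists_finset_iSup_compl_mul_one_add_iSup_lt {I : Type*} {f g : I → ℝ} (hg : 0 ≤ g)
    (hfg : Tendsto (fun i => f i * g i) cofinite (𝓝 0)) {m : ℕ} (hm : 2 ≤ m) {B : ℝ}
    (hB : ∀ i, f i * g i ^ (m + 1) ≤ B) {ε : ℝ} (hε : 0 < ε) :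
    ∃ J : Finset I, (⨆ i : {i : I // i ∉ J}, f i.1 * g i.1) * (1 + ⨆ j : J, g j) < ε := by
  obtain ⟨η, hη, t, ht, hBt, hlt⟩ := exists_pos_le_mul_pow_and_mul_one_add_lt hm B hε
  have hfin : {i | ¬ f i * g i < η}.Finite :=
    eventually_cofinite.mp (hfg.eventually_lt_const hη)
  have hg_le : ∀ j, η ≤ f j * g j → g j ≤ t := fun j hj => by
    have : η * g j ^ m ≤ η * t ^ m :=
      calc η * g j ^ m ≤ f j * g j * g j ^ m := mul_le_mul_of_nonneg_right hj (pow_nonneg (hg j) m)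
        _ = f j * g j ^ (m + 1) := by ring
        _ ≤ η * t ^ m := (hB j).trans hBt
    exact (pow_le_pow_iff_left₀ (hg j) ht (by omega)).mp (le_of_mul_le_mul_left this hη)
  refine ⟨hfin.toFinset, ?_⟩
  have hS : (⨆ i : {i : I // i ∉ hfin.toFinset}, f i.1 * g i.1) ≤ η :=
    Real.iSup_le (fun ⟨i, hi⟩ => (by simpa using hi : f i * g i < η).le) hη.le
  have hT : (⨆ j : hfin.toFinset, g j) ≤ t :=
    Real.iSup_le (fun ⟨j, hj⟩ => hg_le j (by simpa using hj)) ht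
  have hT₀ : 0 ≤ ⨆ j : hfin.toFinset, g j := Real.iSup_nonneg fun j => hg j
  calc _ ≤ η * (1 + t) := mul_le_mul hS (by gcongr) (by positivity) hη.le
    _ < ε := hlt

lemma exists_pow_four_le_of_sq_le {I : Type*} {P : Set (I → ℝ)}
    (hB : ∀ q ∈ P, ∃ p ∈ P, ∃ C : ℝ, 0 < C ∧ ∀ i, (q i) ^ 2 ≤ C * p i) {p : I → ℝ} (hp : p ∈ P) :
    ∃ u ∈ P, ∃ C : ℝ, 0 < C ∧ ∀ i, p i ^ 4 ≤ C * u i := by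
  obtain ⟨w, hw, C₁, hC₁, hpw⟩ := hB p hp
  obtain ⟨u, hu, C₂, hC₂, hwu⟩ := hB w hw
  refine ⟨u, hu, C₁ ^ 2 * C₂, by positivity, fun i => ?_⟩
  calc p i ^ 4 = (p i ^ 2) ^ 2 := by ring
    _ ≤ (C₁ * w i) ^ 2 := by gcongr; exact hpw i
    _ = C₁ ^ 2 * w i ^ 2 := by ring
    _ ≤ C₁ ^ 2 * (C₂ * u i) := by gcongr; exact hwu i
    _ = C₁ ^ 2 * C₂ * u i := by ring

theorem kothe_approx_identity_estimate_general {I : Type*} (P : Set (I → ℝ))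
    (hP0 : ∀ p ∈ P, ∀ i, 0 ≤ p i)
    (hB2 : ∀ q ∈ P, ∃ p ∈ P, ∃ C : ℝ, 0 < C ∧ ∀ i, (q i) ^ 2 ≤ C * p i) :
    ∀ a : I → ℂ, (∀ p ∈ P, Summable fun i => ‖a i‖ * p i) →
      ∀ p ∈ P, ∀ ε : ℝ, 0 < ε →
        ∃ J : Finset I,
          (⨆ i : {i : I // i ∉ J}, ‖a i.1‖ * p i.1) *
            (1 + ⨆ j : J, p j) < ε := by
  intro a ha p hp ε hε
  obtain ⟨u, hu, C, hC, hpu⟩ := exists_pow_four_le_of_sq_le hB2 hp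
  refine exists_finset_iSup_compl_mul_one_add_iSup_lt (hP0 p hp) (ha p hp).tendsto_cofinite_zero
    (m := 3) (by norm_num) (B := C * ∑' i, ‖a i‖ * u i) (fun i => ?_) hε
  calc ‖a i‖ * p i ^ (3 + 1) ≤ ‖a i‖ * (C * u i) := by gcongr; exact hpu i
    _ = C * (‖a i‖ * u i) := by ring
    _ ≤ C * ∑' i, ‖a i‖ * u i := by
      gcongr
      exact (ha u hu).le_tsum i fun j _ => mul_nonneg (norm_nonneg _) (hP0 u hu j)

/-- If a Köthe set `P` on `I` satisfies conditions (B) and (N), then for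
every `a ∈ λ(P)`, `p ∈ P` and `ε > 0` there is a finite `J ⊆ I` with
`(sup_{i ∉ J} |aᵢ| pᵢ) · (1 + sup_{j ∈ J} pⱼ) < ε`. -/
theorem kothe_approx_identity_estimate {I : Type*} (P : Set (I → ℝ))
    (hP0 : ∀ p ∈ P, ∀ i, 0 ≤ p i)
    (hP1 : ∀ i, ∃ p ∈ P, 0 < p i)
    (hP2 : ∀ p ∈ P, ∀ q ∈ P, ∃ r ∈ P, ∀ i, max (p i) (q i) ≤ r i)
    (hB1 : ∀ p ∈ P, ∃ q ∈ P, ∃ C : ℝ, 0 < C ∧ ∀ i, p i ≤ C * (q i) ^ 2)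
    (hB2 : ∀ q ∈ P, ∃ p ∈ P, ∃ C : ℝ, 0 < C ∧ ∀ i, (q i) ^ 2 ≤ C * p i)
    (hN : ∀ p ∈ P, ∃ q ∈ P, ∃ α : I → ℝ, (Summable fun i => |α i|) ∧
      ∀ i, p i ≤ α i * q i) :
    ∀ a : I → ℂ, (∀ p ∈ P, Summable fun i => ‖a i‖ * p i) →
      ∀ p ∈ P, ∀ ε : ℝ, 0 < ε →
        ∃ J : Finset I,
          (⨆ i : {i : I // i ∉ J}, ‖a i.1‖ * p i.1) *
            (1 + ⨆ j : J, p j) < ε :=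
  kothe_approx_identity_estimate_general P hP0 hB2
end
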